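/- Let X be a finite metric space partitioned into m ≥ 1 pairwise disjoint groups X_1,…,X_m, let k_1,…,k_m ≥ 1 with |X_i| ≥ k_i for all i and k = k_1+⋯+k_m ≥ 2, and let μ > 0 with μ ≤ (m+1)/(3m+2) · OPT_f. Suppose S_μ ⊆ X is a greedy candidate on Y = X with threshold μ and capacity k, and for each i ∈ {1,…,m}, S_{μ,i} ⊆ X_i is a greedy candidate on Y = X_i with threshold μ and capacity k. Then |S_μ| = k and |S_{μ,i}| ≥ k_i for every i ∈ {1,…,m}. (The guess μ chosen in the proof of Theorem 4 belongs to the set U′ of guesses whose candidates are sufficiently full.) -/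

import Mathlib

open Finset

variable {α : Type*} [MetricSpace α] [DecidableEq α]

/-- A finite set `S` is `μ`-separated if `d(x,y) ≥ μ` for all distinct `x, y ∈ S`. -/
def Separated (μ : ℝ) (S : Finset α) : Prop :=
  ∀ x ∈ S, ∀ y ∈ S, x ≠ y → μ ≤ dist x y

/-- Max–min diversity of a finite set: the minimum pairwise distance over distinct pairs. -/
noncomputable def divers (S : Finset α) : ℝ :=
  sInf {r : ℝ | ∃ x ∈ S, ∃ y ∈ S, x ≠ y ∧ dist x y = r}

/-- Distance from a point to a (nonempty) finite set: `d(y,S) = min_{s ∈ S} d(y,s)`. -/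
noncomputable def setDist (y : α) (S : Finset α) : ℝ :=
  sInf {r : ℝ | ∃ s ∈ S, dist y s = r}

/-- Minimum pairwise distance over distinct pairs of `X`. -/
noncomputable def dMin (X : Finset α) : ℝ :=
  sInf {r : ℝ | ∃ x ∈ X, ∃ y ∈ X, x ≠ y ∧ dist x y = r}

/-- Maximum pairwise distance over distinct pairs of `X`. -/
noncomputable def dMax (X : Finset α) : ℝ :=
  sSup {r : ℝ | ∃ x ∈ X, ∃ y ∈ X, x ≠ y ∧ dist x y = r}

/-- The geometric grid of guesses `U = { d_min/(1-ε)^j : j ∈ ℕ } ∩ [d_min, d_max]`. -/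
def grid (X : Finset α) (ε : ℝ) : Set ℝ :=
  {μ | (∃ j : ℕ, μ = dMin X / (1 - ε) ^ j) ∧ dMin X ≤ μ ∧ μ ≤ dMax X}

/-- A greedy candidate on ground set `Y` with threshold `μ` and capacity `c`:
`S ⊆ Y`, `S` is `μ`-separated, `|S| ≤ c`, and if `|S| < c` then every `y ∈ Y`
satisfies `d(y,S) < μ` (i.e., has some element of `S` within distance `< μ`). -/
def GreedyCandidate (μ : ℝ) (c : ℕ) (Y S : Finset α) : Prop :=
  S ⊆ Y ∧ Separated μ S ∧ S.card ≤ c ∧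
    (S.card < c → ∀ y ∈ Y, ∃ s ∈ S, dist y s < μ)

/-- `OPT`: the maximum of `div(T)` over all `k`-element subsets `T ⊆ X`. -/
noncomputable def OPTk (X : Finset α) (k : ℕ) : ℝ :=
  sSup {r : ℝ | ∃ T ⊆ X, T.card = k ∧ divers T = r}

/-- `OPT_f`: the maximum of `div(S)` over all fair subsets `S ⊆ X`
(those with `|S ∩ X_i| = k_i` for every group `i`). -/
noncomputable def OPTf (X : Finset α) {m : ℕ} (Xg : Fin m → Finset α) (kg : Fin m → ℕ) : ℝ :=
  sSup {r : ℝ | ∃ S ⊆ X, (∀ i, (S ∩ Xg i).card = kg i) ∧ divers S = r}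

/-- The chain relation on `P` with threshold `τ`: the reflexive–transitive closure of
"both points are in `P` and their distance is `< τ`". -/
def ChainRel (P : Finset α) (τ : ℝ) : α → α → Prop :=
  Relation.ReflTransGen (fun x y => x ∈ P ∧ y ∈ P ∧ dist x y < τ)

/-!
Let `T` be a fair set of diversity `OPT_f`. Since `(m+1)/(3m+2) ≤ 1/2`, `T` is `2μ`-separated,
so the open `μ`-balls around distinct points of `T` are disjoint. A greedy candidate that stops
short of its capacity puts a point in every such ball around `T`, hence has at least `|T| = k`
points; the same argument with `T ∩ X_i` handles the group candidates.
-/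

open Function

theorem Separated.mono {μ ν : ℝ} {S : Finset α} (hS : Separated ν S) (hμν : μ ≤ ν) :
    Separated μ S :=
  fun x hx y hy hxy => hμν.trans (hS x hx y hy hxy)

theorem Separated.subset {μ : ℝ} {S T : Finset α} (hS : Separated μ S) (hTS : T ⊆ S) :
    Separated μ T :=
  fun x hx y hy hxy => hS x (hTS hx) y (hTS hy) hxy

theorem divers_le_dist {S : Finset α} {x y : α} (hx : x ∈ S) (hy : y ∈ S) (hxy : x ≠ y) :
    divers S ≤ dist x y :=
  csInf_le ⟨0, by rintro r ⟨a, -, b, -, -, rfl⟩; exact dist_nonneg⟩ ⟨x, hx, y, hy, hxy, rfl⟩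

theorem separated_divers (S : Finset α) : Separated (divers S) S :=
  fun _ hx _ hy hxy => divers_le_dist hx hy hxy

theorem Separated.card_le_of_forall_exists_dist_lt {μ : ℝ} {S T : Finset α}
    (hT : Separated (2 * μ) T) (hcover : ∀ t ∈ T, ∃ s ∈ S, dist t s < μ) :
    T.card ≤ S.card := by
  refine card_le_card_of_forall_subsingleton (fun t s => dist t s < μ) hcover ?_
  rintro s - x ⟨hx, hxs⟩ y ⟨hy, hys⟩
  by_contra hxy
  have := dist_triangle_right x y s
  linarith [hT x hx y hy hxy]

theorem GreedyCandidate.card_le_card {μ : ℝ} {c : ℕ} {Y S T : Finset α}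
    (hS : GreedyCandidate μ c Y S) (hTY : T ⊆ Y) (hT : Separated (2 * μ) T)
    (hTc : T.card ≤ c) : T.card ≤ S.card := by
  by_contra! hST
  exact (hT.card_le_of_forall_exists_dist_lt fun t ht =>
    hS.2.2.2 (hST.trans_le hTc) t (hTY ht)).not_gt hST

section Fair

variable {ι : Type*} [Fintype ι] {Xg : ι → Finset α} {kg : ι → ℕ}

theorem card_eq_sum_of_forall_card_inter_eq (hdisj : Pairwise (Disjoint on Xg))
    {T : Finset α} (hT : T ⊆ univ.biUnion Xg) (hfair : ∀ i, (T ∩ Xg i).card = kg i) :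
    T.card = ∑ i, kg i := by
  rw [← inter_eq_left.mpr hT, inter_biUnion, card_biUnion]
  · exact sum_congr rfl fun i _ => hfair i
  · exact fun i _ j _ hij => (hdisj hij).mono inter_subset_right inter_subset_right

theorem exists_subset_biUnion_forall_card_inter_eq (hdisj : Pairwise (Disjoint on Xg))
    (hsize : ∀ i, kg i ≤ (Xg i).card) :
    ∃ T ⊆ univ.biUnion Xg, ∀ i, (T ∩ Xg i).card = kg i := by
  choose t ht hcard using fun i => exists_subset_card_eq (hsize i)
  refine ⟨univ.biUnion t, biUnion_mono fun i _ => ht i, fun i => ?_⟩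
  suffices univ.biUnion t ∩ Xg i = t i by rw [this, hcard]
  ext x
  simp only [mem_inter, mem_biUnion, mem_univ, true_and]
  constructor
  · rintro ⟨⟨j, hxj⟩, hxi⟩
    obtain rfl : j = i := by
      by_contra hji
      exact disjoint_left.mp (hdisj hji) (ht j hxj) hxi
    exact hxj
  · exact fun hxi => ⟨⟨i, hxi⟩, ht i hxi⟩

end Fair

theorem exists_divers_eq_OPTf {m : ℕ} {Xg : Fin m → Finset α} {kg : Fin m → ℕ}
    (hdisj : Pairwise (Disjoint on Xg)) (hsize : ∀ i, kg i ≤ (Xg i).card) :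
    ∃ T ⊆ univ.biUnion Xg, (∀ i, (T ∩ Xg i).card = kg i) ∧
      divers T = OPTf (univ.biUnion Xg) Xg kg := by
  set A : Set ℝ := {r | ∃ S ⊆ univ.biUnion Xg, (∀ i, (S ∩ Xg i).card = kg i) ∧ divers S = r}
  have hfin : A.Finite :=
    ((univ.biUnion Xg).powerset.finite_toSet.image divers).subset
      fun r ⟨S, hS, _, hr⟩ => ⟨S, mem_powerset.mpr hS, hr⟩
  obtain ⟨T, hT, hfair⟩ := exists_subset_biUnion_forall_card_inter_eq hdisj hsize
  exact Set.Nonempty.csSup_mem (s := A) ⟨divers T, T, hT, hfair, rfl⟩ hfin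

theorem stmt_12_general (X : Finset α) (m : ℕ)
    (Xg : Fin m → Finset α) (kg : Fin m → ℕ)
    (hcover : X = Finset.univ.biUnion Xg)
    (hdisj : ∀ i j, i ≠ j → Disjoint (Xg i) (Xg j))
    (hsize : ∀ i, kg i ≤ (Xg i).card)
    (μ : ℝ) (hμ : 0 < μ)
    (hμle : μ ≤ ((m : ℝ) + 1) / (3 * (m : ℝ) + 2) * OPTf X Xg kg)
    (S₀ : Finset α) (hS₀ : GreedyCandidate μ (∑ i, kg i) X S₀)
    (Sg : Fin m → Finset α)
    (hSg : ∀ i, GreedyCandidate μ (∑ j, kg j) (Xg i) (Sg i)) :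
    S₀.card = ∑ i, kg i ∧ ∀ i, kg i ≤ (Sg i).card := by
  subst hcover
  have hdisj' : Pairwise (Disjoint on Xg) := fun i j hij => hdisj i j hij
  obtain ⟨T, hTX, hfair, hdiv⟩ := exists_divers_eq_OPTf hdisj' hsize
  have hTcard := card_eq_sum_of_forall_card_inter_eq hdisj' hTX hfair
  have hμOPT : 2 * μ ≤ OPTf (univ.biUnion Xg) Xg kg := by
    have h3m : (0 : ℝ) < 3 * m + 2 := by positivity
    rw [div_mul_eq_mul_div, le_div_iff₀ h3m] at hμle
    nlinarith [mul_nonneg (Nat.cast_nonneg m : (0 : ℝ) ≤ m) hμ.le]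
  have hT : Separated (2 * μ) T := (separated_divers T).mono (hdiv ▸ hμOPT)
  refine ⟨le_antisymm hS₀.2.2.1 (hTcard ▸ hS₀.card_le_card hTX hT hTcard.le), fun i => ?_⟩
  have hki : kg i ≤ ∑ j, kg j := single_le_sum (fun j _ => Nat.zero_le _) (mem_univ i)
  exact hfair i ▸ (hSg i).card_le_card inter_subset_right (hT.subset inter_subset_left)
    (hfair i ▸ hki)

/-- The guess `μ ≤ ((m+1)/(3m+2))·OPT_f` chosen in the proof of Theorem 4 belongs to
`U'`: the group-blind candidate is full and every group-specific candidate has at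
least `k_i` elements. -/
theorem stmt_12 (X : Finset α) (m : ℕ) (hm : 1 ≤ m)
    (Xg : Fin m → Finset α) (kg : Fin m → ℕ)
    (hcover : X = Finset.univ.biUnion Xg)
    (hdisj : ∀ i j, i ≠ j → Disjoint (Xg i) (Xg j))
    (hne : ∀ i, (Xg i).Nonempty)
    (hkg : ∀ i, 1 ≤ kg i) (hsize : ∀ i, kg i ≤ (Xg i).card)
    (hk2 : 2 ≤ ∑ i, kg i)
    (μ : ℝ) (hμ : 0 < μ)
    (hμle : μ ≤ ((m : ℝ) + 1) / (3 * (m : ℝ) + 2) * OPTf X Xg kg)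
    (S₀ : Finset α) (hS₀ : GreedyCandidate μ (∑ i, kg i) X S₀)
    (Sg : Fin m → Finset α)
    (hSg : ∀ i, GreedyCandidate μ (∑ j, kg j) (Xg i) (Sg i)) :
    S₀.card = ∑ i, kg i ∧ ∀ i, kg i ≤ (Sg i).card :=
  stmt_12_general X m Xg kg hcover hdisj hsize μ hμ hμle S₀ hS₀ Sg hSg
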